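/- Write X_k = [A_1 ⊗ ⋯ ⊗ A_k, A] with each A_i = A = 1, and let 1 ≤ p ≤ k. Then there is an allowable Kelly–Mac Lane morphism θ_p : [A_1 ⊗ ⋯ ⊗ A_{p−1} ⊗ A_{p+1} ⊗ ⋯ ⊗ A_k, I] → X_k whose graph pairs A with A_p and pairs each A_i (i ≠ p) in the domain with A_i in the codomain. -/

import Mathlib

namespace KM

/-! ### Shapes and variable sets (Kelly–Mac Lane) -/

/-- Shapes: formal objects built from `1`, `I`, `⊗` and `[ , ]`. -/
inductive Shape : Type where
  | unit : Shape                     -- I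
  | one : Shape                      -- 1
  | tensor : Shape → Shape → Shape   -- ⊗
  | hom : Shape → Shape → Shape      -- [ , ]

/-- The variable set of a shape, as a list of signs (`true` = `+`, `false` = `−`). -/
def vset : Shape → List Bool
  | .unit => []
  | .one => [true]
  | .tensor T S => vset T ++ vset S
  | .hom T S => (vset T).map not ++ vset S

/-- `1 ⊗ ⋯ ⊗ 1` (m copies), with `1^{⊗0} = I`. -/
def onePow : ℕ → Shape
  | 0 => .unit
  | n + 1 => .tensor (onePow n) .one

/-- `X_m = [1^{⊗m}, 1]`. -/
def Xm (m : ℕ) : Shape := .hom (onePow m) .one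

/-- The type of variables (occurrences of `1`) of a shape. -/
def VarsOf : Shape → Type
  | .unit => Empty
  | .one => Unit
  | .tensor T S => VarsOf T ⊕ VarsOf S
  | .hom T S => VarsOf T ⊕ VarsOf S

/-- The variance (sign) of a variable of a shape. -/
def sgn : (T : Shape) → VarsOf T → Bool
  | .unit, x => x.elim
  | .one, _ => true
  | .tensor T S, x => Sum.elim (sgn T) (sgn S) x
  | .hom T S, x => Sum.elim (fun v => ! sgn T v) (sgn S) x

/-- The variance of a variable in the twisted sum `v(T)^op ++ v(S)`. -/
def tsgn (T S : Shape) (x : VarsOf T ⊕ VarsOf S) : Bool :=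
  Sum.elim (fun v => ! sgn T v) (sgn S) x

/-- A Kelly–Mac Lane graph `T → S`: a fixed-point free pairing (involution)
of the variables in the twisted sum `v(T)^op ++ v(S)` matching `+`'s with `−`'s. -/
structure KMGraph (T S : Shape) : Type where
  mate : VarsOf T ⊕ VarsOf S → VarsOf T ⊕ VarsOf S
  invol : ∀ x, mate (mate x) = x
  nofix : ∀ x, mate x ≠ x
  sflip : ∀ x, tsgn T S (mate x) = ! tsgn T S x

/-- The identity graph `1 : T → T`. -/
def idG (T : Shape) : KMGraph T T where
  mate := Sum.elim Sum.inr Sum.inl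
  invol := by rintro (v | v) <;> rfl
  nofix := by rintro (v | v) h <;> cases h
  sflip := by rintro (v | v) <;> simp [tsgn]

/-- Associativity `a : (T ⊗ S) ⊗ R → T ⊗ (S ⊗ R)`. -/
def aG (T S R : Shape) : KMGraph (.tensor (.tensor T S) R) (.tensor T (.tensor S R)) where
  mate := fun x => match x with
    | .inl (.inl (.inl t)) => .inr (.inl t)
    | .inl (.inl (.inr s)) => .inr (.inr (.inl s))
    | .inl (.inr r) => .inr (.inr (.inr r))
    | .inr (.inl t) => .inl (.inl (.inl t))
    | .inr (.inr (.inl s)) => .inl (.inl (.inr s))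
    | .inr (.inr (.inr r)) => .inl (.inr r)
  invol := by rintro (((t | s) | r) | (t | (s | r))) <;> rfl
  nofix := by rintro (((t | s) | r) | (t | (s | r))) h <;> cases h
  sflip := by rintro (((t | s) | r) | (t | (s | r))) <;> simp [tsgn, sgn, Sum.elim]

/-- Inverse associativity `a⁻¹ : T ⊗ (S ⊗ R) → (T ⊗ S) ⊗ R`. -/
def aInvG (T S R : Shape) : KMGraph (.tensor T (.tensor S R)) (.tensor (.tensor T S) R) where
  mate := fun x => match x with
    | .inl (.inl t) => .inr (.inl (.inl t))
    | .inl (.inr (.inl s)) => .inr (.inl (.inr s))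
    | .inl (.inr (.inr r)) => .inr (.inr r)
    | .inr (.inl (.inl t)) => .inl (.inl t)
    | .inr (.inl (.inr s)) => .inl (.inr (.inl s))
    | .inr (.inr r) => .inl (.inr (.inr r))
  invol := by rintro ((t | (s | r)) | ((t | s) | r)) <;> rfl
  nofix := by rintro ((t | (s | r)) | ((t | s) | r)) h <;> cases h
  sflip := by rintro ((t | (s | r)) | ((t | s) | r)) <;> simp [tsgn, sgn, Sum.elim]

/-- Unit `b : T ⊗ I → T`. -/
def bG (T : Shape) : KMGraph (.tensor T .unit) T where
  mate := fun x => match x with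
    | .inl (.inl t) => .inr t
    | .inl (.inr e) => e.elim
    | .inr t => .inl (.inl t)
  invol := by rintro ((t | e) | t) <;> first | exact e.elim | rfl
  nofix := by rintro ((t | e) | t) h <;> first | exact e.elim | simp at h
  sflip := by rintro ((t | e) | t) <;> first | exact e.elim | simp [tsgn, sgn, Sum.elim]

/-- Inverse unit `b⁻¹ : T → T ⊗ I`. -/
def bInvG (T : Shape) : KMGraph T (.tensor T .unit) where
  mate := fun x => match x with
    | .inl t => .inr (.inl t)
    | .inr (.inl t) => .inl t
    | .inr (.inr e) => e.elim
  invol := by rintro (t | (t | e)) <;> first | exact e.elim | rfl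
  nofix := by rintro (t | (t | e)) h <;> first | exact e.elim | simp at h
  sflip := by rintro (t | (t | e)) <;> first | exact e.elim | simp [tsgn, sgn, Sum.elim]

/-- Symmetry `c : T ⊗ S → S ⊗ T`. -/
def cG (T S : Shape) : KMGraph (.tensor T S) (.tensor S T) where
  mate := fun x => match x with
    | .inl (.inl t) => .inr (.inr t)
    | .inl (.inr s) => .inr (.inl s)
    | .inr (.inl s) => .inl (.inr s)
    | .inr (.inr t) => .inl (.inl t)
  invol := by rintro ((t | s) | (s | t)) <;> rfl
  nofix := by rintro ((t | s) | (s | t)) h <;> cases h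
  sflip := by rintro ((t | s) | (s | t)) <;> simp [tsgn, sgn, Sum.elim]

/-- `d : T → [S, T ⊗ S]`. -/
def dG (T S : Shape) : KMGraph T (.hom S (.tensor T S)) where
  mate := fun x => match x with
    | .inl t => .inr (.inr (.inl t))
    | .inr (.inl s) => .inr (.inr (.inr s))
    | .inr (.inr (.inl t)) => .inl t
    | .inr (.inr (.inr s)) => .inr (.inl s)
  invol := by rintro (t | (s | (t | s))) <;> rfl
  nofix := by rintro (t | (s | (t | s))) h <;> cases h
  sflip := by rintro (t | (s | (t | s))) <;> simp [tsgn, sgn, Sum.elim]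

/-- `e : [T, S] ⊗ T → S`. -/
def eG (T S : Shape) : KMGraph (.tensor (.hom T S) T) S where
  mate := fun x => match x with
    | .inl (.inl (.inl t)) => .inl (.inr t)
    | .inl (.inl (.inr s)) => .inr s
    | .inl (.inr t) => .inl (.inl (.inl t))
    | .inr s => .inl (.inl (.inr s))
  invol := by rintro (((t | s) | t) | s) <;> rfl
  nofix := by rintro (((t | s) | t) | s) h <;> cases h
  sflip := by rintro (((t | s) | t) | s) <;> simp [tsgn, sgn, Sum.elim]


section TensorHom
variable {T T' S S' : Shape}

/-- relabelling of the variables of `f : T → T'` into those of `T ⊗ S → T' ⊗ S'`. -/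
def rlf (T T' S S' : Shape) : VarsOf T ⊕ VarsOf T' → VarsOf (.tensor T S) ⊕ VarsOf (.tensor T' S') :=
  Sum.elim (fun a => .inl (.inl a)) (fun a => .inr (.inl a))

/-- relabelling of the variables of `g : S → S'` into those of `T ⊗ S → T' ⊗ S'`. -/
def rlg (T T' S S' : Shape) : VarsOf S ⊕ VarsOf S' → VarsOf (.tensor T S) ⊕ VarsOf (.tensor T' S') :=
  Sum.elim (fun a => .inl (.inr a)) (fun a => .inr (.inr a))

def tmate (f : KMGraph T T') (g : KMGraph S S') :
    VarsOf (.tensor T S) ⊕ VarsOf (.tensor T' S') → VarsOf (.tensor T S) ⊕ VarsOf (.tensor T' S')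
  | .inl (.inl t) => rlf T T' S S' (f.mate (.inl t))
  | .inl (.inr s) => rlg T T' S S' (g.mate (.inl s))
  | .inr (.inl t') => rlf T T' S S' (f.mate (.inr t'))
  | .inr (.inr s') => rlg T T' S S' (g.mate (.inr s'))

lemma tmate_rlf (f : KMGraph T T') (g : KMGraph S S') (z : VarsOf T ⊕ VarsOf T') :
    tmate f g (rlf T T' S S' z) = rlf T T' S S' (f.mate z) := by cases z <;> rfl

lemma tmate_rlg (f : KMGraph T T') (g : KMGraph S S') (z : VarsOf S ⊕ VarsOf S') :
    tmate f g (rlg T T' S S' z) = rlg T T' S S' (g.mate z) := by cases z <;> rfl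

lemma rlf_inj : Function.Injective (rlf T T' S S') := by
  rintro (a | a) (b | b) h <;> simp only [rlf, Sum.elim] at h <;> (try injection h with h) <;> (try injection h with h) <;> (try cases h) <;> rfl

lemma rlg_inj : Function.Injective (rlg T T' S S') := by
  rintro (a | a) (b | b) h <;> simp only [rlg, Sum.elim] at h <;> (try injection h with h) <;> (try injection h with h) <;> (try cases h) <;> rfl

lemma tsgn_rlf (z : VarsOf T ⊕ VarsOf T') :
    tsgn (.tensor T S) (.tensor T' S') (rlf T T' S S' z) = tsgn T T' z := by
  cases z <;> rfl

lemma tsgn_rlg (z : VarsOf S ⊕ VarsOf S') :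
    tsgn (.tensor T S) (.tensor T' S') (rlg T T' S S' z) = tsgn S S' z := by
  cases z <;> rfl

/-- Tensor product of graphs `f ⊗ g : T ⊗ S → T' ⊗ S'`. -/
def tensorG (f : KMGraph T T') (g : KMGraph S S') : KMGraph (.tensor T S) (.tensor T' S') where
  mate := tmate f g
  invol := by
    rintro ((t | s) | (t' | s'))
    · show tmate f g (rlf T T' S S' (f.mate (.inl t))) = _
      rw [tmate_rlf, f.invol]; rfl
    · show tmate f g (rlg T T' S S' (g.mate (.inl s))) = _
      rw [tmate_rlg, g.invol]; rfl
    · show tmate f g (rlf T T' S S' (f.mate (.inr t'))) = _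
      rw [tmate_rlf, f.invol]; rfl
    · show tmate f g (rlg T T' S S' (g.mate (.inr s'))) = _
      rw [tmate_rlg, g.invol]; rfl
  nofix := by
    rintro ((t | s) | (t' | s')) h
    · exact f.nofix (.inl t) (rlf_inj h)
    · exact g.nofix (.inl s) (rlg_inj h)
    · exact f.nofix (.inr t') (rlf_inj h)
    · exact g.nofix (.inr s') (rlg_inj h)
  sflip := by
    rintro ((t | s) | (t' | s'))
    · show tsgn _ _ (rlf T T' S S' (f.mate (.inl t))) = _
      rw [tsgn_rlf, f.sflip]; rfl
    · show tsgn _ _ (rlg T T' S S' (g.mate (.inl s))) = _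
      rw [tsgn_rlg, g.sflip]; rfl
    · show tsgn _ _ (rlf T T' S S' (f.mate (.inr t'))) = _
      rw [tsgn_rlf, f.sflip]; rfl
    · show tsgn _ _ (rlg T T' S S' (g.mate (.inr s'))) = _
      rw [tsgn_rlg, g.sflip]; rfl

/-- relabelling of the variables of `f : T → T'` into those of `[T', S] → [T, S']`. -/
def hlf (T T' S S' : Shape) : VarsOf T ⊕ VarsOf T' → VarsOf (.hom T' S) ⊕ VarsOf (.hom T S') :=
  Sum.elim (fun a => .inr (.inl a)) (fun a => .inl (.inl a))

/-- relabelling of the variables of `g : S → S'` into those of `[T', S] → [T, S']`. -/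
def hlg (T T' S S' : Shape) : VarsOf S ⊕ VarsOf S' → VarsOf (.hom T' S) ⊕ VarsOf (.hom T S') :=
  Sum.elim (fun a => .inl (.inr a)) (fun a => .inr (.inr a))

def hmate (f : KMGraph T T') (g : KMGraph S S') :
    VarsOf (.hom T' S) ⊕ VarsOf (.hom T S') → VarsOf (.hom T' S) ⊕ VarsOf (.hom T S')
  | .inl (.inl t') => hlf T T' S S' (f.mate (.inr t'))
  | .inl (.inr s) => hlg T T' S S' (g.mate (.inl s))
  | .inr (.inl t) => hlf T T' S S' (f.mate (.inl t))
  | .inr (.inr s') => hlg T T' S S' (g.mate (.inr s'))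

lemma hmate_hlf (f : KMGraph T T') (g : KMGraph S S') (z : VarsOf T ⊕ VarsOf T') :
    hmate f g (hlf T T' S S' z) = hlf T T' S S' (f.mate z) := by cases z <;> rfl

lemma hmate_hlg (f : KMGraph T T') (g : KMGraph S S') (z : VarsOf S ⊕ VarsOf S') :
    hmate f g (hlg T T' S S' z) = hlg T T' S S' (g.mate z) := by cases z <;> rfl

lemma hlf_inj : Function.Injective (hlf T T' S S') := by
  rintro (a | a) (b | b) h <;> simp only [hlf, Sum.elim] at h <;> (try injection h with h) <;> (try injection h with h) <;> (try cases h) <;> rfl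

lemma hlg_inj : Function.Injective (hlg T T' S S') := by
  rintro (a | a) (b | b) h <;> simp only [hlg, Sum.elim] at h <;> (try injection h with h) <;> (try injection h with h) <;> (try cases h) <;> rfl

lemma tsgn_hlf (z : VarsOf T ⊕ VarsOf T') :
    tsgn (.hom T' S) (.hom T S') (hlf T T' S S' z) = tsgn T T' z := by
  cases z <;> simp [tsgn, sgn, hlf, Sum.elim]

lemma tsgn_hlg (z : VarsOf S ⊕ VarsOf S') :
    tsgn (.hom T' S) (.hom T S') (hlg T T' S S' z) = tsgn S S' z := by
  cases z <;> simp [tsgn, sgn, hlg, Sum.elim]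

/-- `[f, g] : [T', S] → [T, S']` for graphs `f : T → T'`, `g : S → S'`. -/
def homG (f : KMGraph T T') (g : KMGraph S S') : KMGraph (.hom T' S) (.hom T S') where
  mate := hmate f g
  invol := by
    rintro ((t' | s) | (t | s'))
    · show hmate f g (hlf T T' S S' (f.mate (.inr t'))) = _
      rw [hmate_hlf, f.invol]; rfl
    · show hmate f g (hlg T T' S S' (g.mate (.inl s))) = _
      rw [hmate_hlg, g.invol]; rfl
    · show hmate f g (hlf T T' S S' (f.mate (.inl t))) = _
      rw [hmate_hlf, f.invol]; rfl
    · show hmate f g (hlg T T' S S' (g.mate (.inr s'))) = _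
      rw [hmate_hlg, g.invol]; rfl
  nofix := by
    rintro ((t' | s) | (t | s')) h
    · exact f.nofix (.inr t') (hlf_inj h)
    · exact g.nofix (.inl s) (hlg_inj h)
    · exact f.nofix (.inl t) (hlf_inj h)
    · exact g.nofix (.inr s') (hlg_inj h)
  sflip := by
    rintro ((t' | s) | (t | s'))
    · show tsgn _ _ (hlf T T' S S' (f.mate (.inr t'))) = _
      rw [tsgn_hlf, f.sflip]
      show _ = ! tsgn (.hom T' S) (.hom T S') (hlf T T' S S' (.inr t'))
      rw [tsgn_hlf]
    · show tsgn _ _ (hlg T T' S S' (g.mate (.inl s))) = _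
      rw [tsgn_hlg, g.sflip]
      show _ = ! tsgn (.hom T' S) (.hom T S') (hlg T T' S S' (.inl s))
      rw [tsgn_hlg]
    · show tsgn _ _ (hlf T T' S S' (f.mate (.inl t))) = _
      rw [tsgn_hlf, f.sflip]
      show _ = ! tsgn (.hom T' S) (.hom T S') (hlf T T' S S' (.inl t))
      rw [tsgn_hlf]
    · show tsgn _ _ (hlg T T' S S' (g.mate (.inr s'))) = _
      rw [tsgn_hlg, g.sflip]
      show _ = ! tsgn (.hom T' S) (.hom T S') (hlg T T' S S' (.inr s'))
      rw [tsgn_hlg]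

end TensorHom

/-! ### Composition of graphs, relationally -/

section Comp
variable (T S R : Shape)

/-- Inclusion of the variables of `T → S` into the variables of a composable pair. -/
def eTS : VarsOf T ⊕ VarsOf S → VarsOf T ⊕ VarsOf S ⊕ VarsOf R :=
  Sum.elim Sum.inl (fun s => Sum.inr (Sum.inl s))

def eSR : VarsOf S ⊕ VarsOf R → VarsOf T ⊕ VarsOf S ⊕ VarsOf R :=
  Sum.elim (fun s => Sum.inr (Sum.inl s)) (fun r => Sum.inr (Sum.inr r))

def eTR : VarsOf T ⊕ VarsOf R → VarsOf T ⊕ VarsOf S ⊕ VarsOf R :=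
  Sum.elim Sum.inl (fun r => Sum.inr (Sum.inr r))

variable {T S R}

/-- One step along the pairings of `f` or of `g`. -/
def Step (f : KMGraph T S) (g : KMGraph S R) (x y : VarsOf T ⊕ VarsOf S ⊕ VarsOf R) : Prop :=
  (∃ u, eTS T S R u = x ∧ eTS T S R (f.mate u) = y) ∨
  (∃ u, eSR T S R u = x ∧ eSR T S R (g.mate u) = y)

/-- Two variables are connected if they are joined by an alternating path. -/
def Connected (f : KMGraph T S) (g : KMGraph S R) :
    (VarsOf T ⊕ VarsOf S ⊕ VarsOf R) → (VarsOf T ⊕ VarsOf S ⊕ VarsOf R) → Prop :=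
  Relation.ReflTransGen (Step f g)

/-- `h` is the composite graph `g ∘ f`: it pairs `u` with `v` exactly when they are
joined by an alternating path through the variables of `S`. -/
def IsComposite (f : KMGraph T S) (g : KMGraph S R) (h : KMGraph T R) : Prop :=
  ∀ u, Connected f g (eTR T S R u) (eTR T S R (h.mate u))

/-- `f` and `g` are compatible: composing them gives no closed loops, i.e. every
variable of `S` is linked to a variable of `T` or `R`. -/
def Compatible (f : KMGraph T S) (g : KMGraph S R) : Prop :=
  ∀ s : VarsOf S, ∃ u, Connected f g (Sum.inr (Sum.inl s)) (eTR T S R u)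

end Comp

/-- The allowable morphisms: the smallest class of graphs containing `1, a, a⁻¹, b, b⁻¹, c, d, e`
and closed under `⊗`, `[ , ]` and composition. -/
inductive Allowable : {T S : Shape} → KMGraph T S → Prop
  | id (T : Shape) : Allowable (idG T)
  | assoc (T S R : Shape) : Allowable (aG T S R)
  | assocInv (T S R : Shape) : Allowable (aInvG T S R)
  | unit (T : Shape) : Allowable (bG T)
  | unitInv (T : Shape) : Allowable (bInvG T)
  | braid (T S : Shape) : Allowable (cG T S)
  | dgen (T S : Shape) : Allowable (dG T S)
  | egen (T S : Shape) : Allowable (eG T S)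
  | tensor {T T' S S' : Shape} {f : KMGraph T T'} {g : KMGraph S S'} :
      Allowable f → Allowable g → Allowable (tensorG f g)
  | homc {T T' S S' : Shape} {f : KMGraph T T'} {g : KMGraph S S'} :
      Allowable f → Allowable g → Allowable (homG f g)
  | comp {T S R : Shape} {f : KMGraph T S} {g : KMGraph S R} {h : KMGraph T R} :
      Allowable f → Allowable g → IsComposite f g h → Allowable h

/-! ### Trees -/

/-- The data of a (combed) tree with `k` ordered nodes of arities `m 0, …, m (k-1)` and
`l` leaves: a bijection from node-inputs plus a root marker to node-outputs plus leaf markers. -/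
abbrev TreeBij (k : ℕ) (m : Fin k → ℕ) (l : ℕ) : Type :=
  ((Σ i : Fin k, Fin (m i)) ⊕ Unit) ≃ (Fin k ⊕ Fin l)

/-- The loop condition: a nonempty cyclic sequence of node indices `t 0, …, t n` such that
the `b j`-th input of node `t j` is attached to the output of node `t (j-1)` (cyclically). -/
def HasLoop {k : ℕ} {m : Fin k → ℕ} {l : ℕ} (α : TreeBij k m l) : Prop :=
  ∃ (n : ℕ) (t : Fin (n + 1) → Fin k) (b : (j : Fin (n + 1)) → Fin (m (t j))),
    ∀ j, α (Sum.inl ⟨t j, b j⟩) = Sum.inl (t (j - 1))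

/-- A closed loop in the graph defined by `α` on the nodes `N_1, …, N_k`:
a closed walk along pairwise distinct edges.  An edge is a node input together with the node
output it is attached to under `α`; its endpoints are the two nodes involved. -/
def HasClosedLoop {k : ℕ} {m : Fin k → ℕ} {l : ℕ} (α : TreeBij k m l) : Prop :=
  ∃ (n : ℕ) (v : Fin (n + 1) → Fin k) (e : Fin (n + 1) → Σ i : Fin k, Fin (m i)),
    Function.Injective e ∧
    ∀ j, ((e j).1 = v j ∧ α (Sum.inl (e j)) = Sum.inl (v (j + 1))) ∨
         ((e j).1 = v (j + 1) ∧ α (Sum.inl (e j)) = Sum.inl (v j))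

/-! ### Trees as morphisms in K1 -/

/-- `X_{m 0} ⊗ ⋯ ⊗ X_{m (k-1)}` (associated to the right, with empty tensor `I`). -/
def domShape : (k : ℕ) → (Fin k → ℕ) → Shape
  | 0, _ => .unit
  | k + 1, m => .tensor (Xm (m 0)) (domShape k (fun i => m i.succ))

/-- The `j`-th variable of `1^{⊗m}`. -/
def powVar : (m : ℕ) → Fin m → VarsOf (onePow m)
  | 0, j => j.elim0
  | m + 1, j => Fin.lastCases (Sum.inr ()) (fun i => Sum.inl (powVar m i)) j

/-- The variable of `X_{m 0} ⊗ ⋯ ⊗ X_{m (k-1)}` corresponding to the `j`-th input of the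
`i`-th node. -/
def inputVar : (k : ℕ) → (m : Fin k → ℕ) → (i : Fin k) → Fin (m i) → VarsOf (domShape k m)
  | 0, _, i, _ => i.elim0
  | k + 1, m, i, j =>
    Fin.cases (motive := fun i => Fin (m i) → VarsOf (domShape (k + 1) m))
      (fun j => Sum.inl (Sum.inl (powVar (m 0) j)))
      (fun i' j => Sum.inr (inputVar k (fun t => m t.succ) i' j)) i j

/-- The variable of `X_{m 0} ⊗ ⋯ ⊗ X_{m (k-1)}` corresponding to the output of the
`i`-th node. -/
def outputVar : (k : ℕ) → (m : Fin k → ℕ) → Fin k → VarsOf (domShape k m)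
  | 0, _, i => i.elim0
  | k + 1, m, i =>
    Fin.cases (motive := fun _ => VarsOf (domShape (k + 1) m))
      (Sum.inl (Sum.inr ()))
      (fun i' => Sum.inr (outputVar k (fun t => m t.succ) i')) i

/-- The variable of `X_l` corresponding to the `p`-th leaf. -/
def leafVar (l : ℕ) (p : Fin l) : VarsOf (Xm l) := Sum.inl (powVar l p)

/-- The variable of `X_l` corresponding to the root. -/
def rootVar (l : ℕ) : VarsOf (Xm l) := Sum.inr ()

/-- Node inputs and the root marker, as variables of the graph
`X_{m 0} ⊗ ⋯ ⊗ X_{m (k-1)} → X_l`. -/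
def srcv (k : ℕ) (m : Fin k → ℕ) (l : ℕ) :
    ((Σ i : Fin k, Fin (m i)) ⊕ Unit) → VarsOf (domShape k m) ⊕ VarsOf (Xm l) :=
  Sum.elim (fun x => Sum.inl (inputVar k m x.1 x.2)) (fun _ => Sum.inr (rootVar l))

/-- Node outputs and leaf markers, as variables of the graph
`X_{m 0} ⊗ ⋯ ⊗ X_{m (k-1)} → X_l`. -/
def targ (k : ℕ) (m : Fin k → ℕ) (l : ℕ) :
    (Fin k ⊕ Fin l) → VarsOf (domShape k m) ⊕ VarsOf (Xm l) :=
  Sum.elim (fun r => Sum.inl (outputVar k m r)) (fun p => Sum.inr (leafVar l p))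

/-- The graph `ξ : X_{m 0} ⊗ ⋯ ⊗ X_{m (k-1)} → X_l` represents the tree (bijection) `α`:
its pairing sends each node input (resp. the root marker) exactly where `α` does. -/
def Represents {k : ℕ} {m : Fin k → ℕ} {l : ℕ}
    (ξ : KMGraph (domShape k m) (Xm l)) (α : TreeBij k m l) : Prop :=
  ∀ x, ξ.mate (srcv k m l x) = targ k m l (α x)

/-- Dual form: the graph `ξ : I → [X_{m 0} ⊗ ⋯ ⊗ X_{m (k-1)}, X_l]` represents the tree `α`. -/
def Represents' {k : ℕ} {m : Fin k → ℕ} {l : ℕ}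
    (ξ : KMGraph .unit (.hom (domShape k m) (Xm l))) (α : TreeBij k m l) : Prop :=
  ∀ x, ξ.mate (Sum.inr (srcv k m l x)) = Sum.inr (targ k m l (α x))

/-!
A sign-preserving bijection of variables `T ≅ S` defines a graph `T → S`, and composing any graph
with it merely relabels the pairing, so such composites need no path chasing. For `1^{⊗n}` every
permutation of the variables gives an allowable graph: the symmetric group is generated by
adjacent transpositions, and swapping the last two factors is `a⁻¹ ∘ (1 ⊗ c) ∘ a`.

The morphism `θ_last : [Y, I] → [Y ⊗ 1, 1]` is the transpose, under `d` and `[1, -]`, of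
`[Y, I] ⊗ (Y ⊗ 1) ≅ ([Y, I] ⊗ Y) ⊗ 1 → I ⊗ 1 ≅ 1` (the middle map is `e ⊗ 1`); it pairs `A`
with the last factor. Following it by `[π, 1]`, for the permutation `π` of `1^{⊗k}` moving the
last factor to position `p`, gives `θ_p`.
-/

namespace KMGraph

variable {T S R T' S' : Shape}

@[ext]
lemma ext {f g : KMGraph T S} (h : f.mate = g.mate) : f = g := by
  cases f; cases g; cases h; rfl

def map (f : KMGraph T S) (e : VarsOf T ⊕ VarsOf S ≃ VarsOf T' ⊕ VarsOf S')
    (he : ∀ x, tsgn T' S' (e x) = tsgn T S x) : KMGraph T' S' where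
  mate x := e (f.mate (e.symm x))
  invol x := by simp [f.invol]
  nofix x h := f.nofix (e.symm x) (e.eq_symm_apply.mpr h)
  sflip x := by rw [he, f.sflip, ← he, e.apply_symm_apply]

def ofEquiv (e : VarsOf T ≃ VarsOf S) (he : ∀ v, sgn S (e v) = sgn T v) : KMGraph T S where
  mate := Sum.elim (fun v => .inr (e v)) (fun w => .inl (e.symm w))
  invol := by rintro (v | w) <;> simp
  nofix := by rintro (v | w) h <;> simp at h
  sflip
    | .inl v => by simp [tsgn, he]
    | .inr w => by simp [tsgn, ← he (e.symm w)]

def mapRight (f : KMGraph T S) (e : VarsOf S ≃ VarsOf R) (he : ∀ v, sgn R (e v) = sgn S v) :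
    KMGraph T R :=
  f.map ((Equiv.refl _).sumCongr e) (by rintro (v | v) <;> simp [tsgn, he])

def mapLeft (e : VarsOf T' ≃ VarsOf T) (he : ∀ v, sgn T (e v) = sgn T' v) (f : KMGraph T S) :
    KMGraph T' S :=
  f.map (e.symm.sumCongr (Equiv.refl _)) (by rintro (v | v) <;> simp [tsgn, ← he])

def curry (g : KMGraph (.tensor T S) R) : KMGraph T (.hom S R) :=
  g.map (Equiv.sumAssoc (VarsOf T) (VarsOf S) (VarsOf R)) (by rintro ((v | v) | v) <;> rfl)

end KMGraph

section Composite

variable {T S R T' : Shape} (f : KMGraph T S) (g : KMGraph S R)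

lemma connected_mate_left (u : VarsOf T ⊕ VarsOf S) :
    Connected f g (eTS T S R u) (eTS T S R (f.mate u)) :=
  .single (.inl ⟨u, rfl, rfl⟩)

lemma connected_mate_right (u : VarsOf S ⊕ VarsOf R) :
    Connected f g (eSR T S R u) (eSR T S R (g.mate u)) :=
  .single (.inr ⟨u, rfl, rfl⟩)

variable {f g}

lemma isComposite_ofEquiv_right (e : VarsOf S ≃ VarsOf R) (he : ∀ v, sgn R (e v) = sgn S v) :
    IsComposite f (.ofEquiv e he) (f.mapRight e he) := by
  have left := connected_mate_left f (.ofEquiv e he)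
  have right := connected_mate_right f (.ofEquiv e he)
  have out (u) : Connected f (.ofEquiv e he) (eTS T S R u)
      (eTR T S R ((Equiv.refl _).sumCongr e (f.mate u))) := by
    have h := left u
    rcases hf : f.mate u with t | s <;> rw [hf] at h
    · exact h
    · exact h.trans (right (.inl s))
  rintro (t | r)
  · exact out (.inl t)
  · exact (right (.inr r)).trans (out (.inr (e.symm r)))

lemma isComposite_ofEquiv_left (e : VarsOf T' ≃ VarsOf T) (he : ∀ v, sgn T (e v) = sgn T' v)
    (f : KMGraph T S) :
    IsComposite (.ofEquiv e he) f (f.mapLeft e he) := by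
  have left := connected_mate_left (.ofEquiv e he) f
  have right := connected_mate_right (.ofEquiv e he) f
  have into (u) : Connected (.ofEquiv e he) f (eSR T' T S u)
      (eTR T' T S (e.symm.sumCongr (Equiv.refl _) (f.mate u))) := by
    have h := right u
    rcases hf : f.mate u with t | s <;> rw [hf] at h
    · exact h.trans (left (.inr t))
    · exact h
  rintro (t | s)
  · exact (left (.inl t)).trans (into (.inl (e t)))
  · exact into (.inr s)

lemma isComposite_dG_homG (g : KMGraph (.tensor T S) R) :
    IsComposite (dG T S) (homG (idG S) g) g.curry := by
  have left := connected_mate_left (dG T S) (homG (idG S) g)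
  have right := connected_mate_right (dG T S) (homG (idG S) g)
  have through (u) : Connected (dG T S) (homG (idG S) g)
      (eSR T (.hom S (.tensor T S)) (.hom S R) (hlg S S (.tensor T S) R u))
      (eTR T (.hom S (.tensor T S)) (.hom S R)
        (Equiv.sumAssoc (VarsOf T) (VarsOf S) (VarsOf R) (g.mate u))) := by
    have h := right (hlg S S (.tensor T S) R u)
    rw [show (homG (idG S) g).mate (hlg S S (.tensor T S) R u) = _ from hmate_hlg _ _ u] at h
    rcases hg : g.mate u with (t | s) | r <;> rw [hg] at h
    · exact h.trans (left (.inr (.inr (.inl t))))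
    · exact (h.trans (left (.inr (.inr (.inr s))))).trans (right (.inl (.inl s)))
    · exact h
  rintro (t | s | r)
  · exact (left (.inl t)).trans (through (.inl (.inl t)))
  · exact ((right (.inr (.inl s))).trans (left (.inr (.inl s)))).trans (through (.inl (.inr s)))
  · exact through (.inr r)

end Composite

open KMGraph in
def IsAllowableEquiv (T S : Shape) (e : VarsOf T ≃ VarsOf S) : Prop :=
  ∃ he : ∀ v, sgn S (e v) = sgn T v, Allowable (ofEquiv e he)

namespace IsAllowableEquiv

variable {T S R T' S' : Shape}

lemma of_eq {e e' : VarsOf T ≃ VarsOf S} (h : IsAllowableEquiv T S e) (heq : e = e') :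
    IsAllowableEquiv T S e' :=
  heq ▸ h

lemma refl (T : Shape) : IsAllowableEquiv T T (Equiv.refl _) := by
  refine ⟨fun _ => rfl, ?_⟩
  convert Allowable.id T using 1
  ext (v | v) <;> rfl

lemma trans {e : VarsOf T ≃ VarsOf S} {e' : VarsOf S ≃ VarsOf R}
    (h : IsAllowableEquiv T S e) (h' : IsAllowableEquiv S R e') :
    IsAllowableEquiv T R (e.trans e') := by
  obtain ⟨he, hA⟩ := h
  obtain ⟨he', hA'⟩ := h'
  refine ⟨fun v => (he' _).trans (he v), ?_⟩
  convert Allowable.comp hA hA' (isComposite_ofEquiv_right e' he') using 1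
  ext (v | v) <;> rfl

lemma sumCongr {e : VarsOf T ≃ VarsOf T'} {e' : VarsOf S ≃ VarsOf S'}
    (h : IsAllowableEquiv T T' e) (h' : IsAllowableEquiv S S' e') :
    IsAllowableEquiv (.tensor T S) (.tensor T' S') (e.sumCongr e') := by
  obtain ⟨he, hA⟩ := h
  obtain ⟨he', hA'⟩ := h'
  refine ⟨fun | .inl v => he v | .inr v => he' v, ?_⟩
  convert hA.tensor hA' using 1
  ext ((v | v) | (v | v)) <;> rfl

lemma symm_sumCongr {e : VarsOf T ≃ VarsOf T'} {e' : VarsOf S ≃ VarsOf S'}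
    (h : IsAllowableEquiv T T' e) (h' : IsAllowableEquiv S S' e') :
    IsAllowableEquiv (.hom T' S) (.hom T S') (e.symm.sumCongr e') := by
  obtain ⟨he, hA⟩ := h
  obtain ⟨he', hA'⟩ := h'
  refine ⟨fun
    | .inl v => show (!sgn T (e.symm v)) = !sgn T' v by rw [← he, e.apply_symm_apply]
    | .inr v => he' v, ?_⟩
  convert hA.homc hA' using 1
  ext ((v | v) | (v | v)) <;> rfl

lemma sumAssoc (T S R : Shape) :
    IsAllowableEquiv (.tensor (.tensor T S) R) (.tensor T (.tensor S R))
      (Equiv.sumAssoc (VarsOf T) (VarsOf S) (VarsOf R)) := by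
  refine ⟨by rintro ((v | v) | v) <;> rfl, ?_⟩
  convert Allowable.assoc T S R using 1
  ext (((v | v) | v) | v | v | v) <;> rfl

lemma sumAssoc_symm (T S R : Shape) :
    IsAllowableEquiv (.tensor T (.tensor S R)) (.tensor (.tensor T S) R)
      (Equiv.sumAssoc (VarsOf T) (VarsOf S) (VarsOf R)).symm := by
  refine ⟨by rintro (v | v | v) <;> rfl, ?_⟩
  convert Allowable.assocInv T S R using 1
  ext ((v | v | v) | ((v | v) | v)) <;> rfl

lemma sumComm (T S : Shape) :
    IsAllowableEquiv (.tensor T S) (.tensor S T) (Equiv.sumComm (VarsOf T) (VarsOf S)) := by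
  refine ⟨by rintro (v | v) <;> rfl, ?_⟩
  convert Allowable.braid T S using 1
  ext ((v | v) | (v | v)) <;> rfl

instance : IsEmpty (VarsOf .unit) := inferInstanceAs (IsEmpty Empty)

lemma sumEmpty (T : Shape) :
    IsAllowableEquiv (.tensor T .unit) T (Equiv.sumEmpty (VarsOf T) (VarsOf .unit)) := by
  refine ⟨by rintro (v | v); exacts [rfl, isEmptyElim v], ?_⟩
  convert Allowable.unit T using 1
  ext ((v | v) | v)
  exacts [rfl, isEmptyElim v, rfl]

end IsAllowableEquiv

section Relabel

variable {T S R T' : Shape}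

lemma Allowable.mapRight {f : KMGraph T S} {e : VarsOf S ≃ VarsOf R}
    (hf : Allowable f) (he : IsAllowableEquiv S R e) : Allowable (f.mapRight e he.1) :=
  .comp hf he.2 (isComposite_ofEquiv_right e he.1)

lemma Allowable.mapLeft {f : KMGraph T S} {e : VarsOf T' ≃ VarsOf T}
    (he : IsAllowableEquiv T' T e) (hf : Allowable f) : Allowable (f.mapLeft e he.1) :=
  .comp he.2 hf (isComposite_ofEquiv_left e he.1 f)

lemma Allowable.curry {g : KMGraph (.tensor T S) R} (hg : Allowable g) : Allowable g.curry :=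
  .comp (.dgen T S) (.homc (.id S) hg) (isComposite_dG_homG g)

end Relabel

@[simp]
lemma powVar_castSucc (n : ℕ) (i : Fin n) :
    powVar (n + 1) i.castSucc = Sum.inl (powVar n i) :=
  Fin.lastCases_castSucc (motive := fun _ => VarsOf (onePow (n + 1))) i

@[simp]
lemma powVar_last (n : ℕ) : powVar (n + 1) (Fin.last n) = Sum.inr () :=
  Fin.lastCases_last (motive := fun _ => VarsOf (onePow (n + 1)))

lemma powVar_bijective : ∀ n, Function.Bijective (powVar n)
  | 0 => ⟨fun i => i.elim0, fun v => isEmptyElim (α := VarsOf .unit) v⟩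
  | n + 1 => by
    obtain ⟨hinj, hsurj⟩ := powVar_bijective n
    refine ⟨fun i j hij => ?_, ?_⟩
    · induction i using Fin.lastCases <;> induction j using Fin.lastCases <;>
        simp only [powVar_castSucc, powVar_last] at hij
      · rfl
      · cases hij
      · cases hij
      · exact congrArg _ (hinj (Sum.inl_injective hij))
    · rintro (v | ⟨⟩)
      · obtain ⟨i, rfl⟩ := hsurj v
        exact ⟨i.castSucc, powVar_castSucc n i⟩
      · exact ⟨Fin.last n, powVar_last n⟩

lemma equiv_ext_powVar {n : ℕ} {X : Type} {e e' : VarsOf (onePow n) ≃ X}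
    (h : ∀ i, e (powVar n i) = e' (powVar n i)) : e = e' :=
  Equiv.ext fun v => by
    obtain ⟨i, rfl⟩ := (powVar_bijective n).2 v
    exact h i

noncomputable def powEquiv (n : ℕ) : Fin n ≃ VarsOf (onePow n) :=
  Equiv.ofBijective (powVar n) (powVar_bijective n)

lemma permCongr_powEquiv_apply (n : ℕ) (σ : Equiv.Perm (Fin n)) (i : Fin n) :
    (powEquiv n).permCongr σ (powVar n i) = powVar n (σ i) :=
  congrArg (powEquiv n ∘ σ) ((powEquiv n).symm_apply_apply i)

lemma permCongr_swap_last (m : ℕ) :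
    (powEquiv (m + 2)).permCongr (Equiv.swap (Fin.last m).castSucc (Fin.last m).succ) =
      ((Equiv.sumAssoc _ _ _).trans ((Equiv.refl _).sumCongr (Equiv.sumComm _ _))).trans
        (Equiv.sumAssoc (VarsOf (onePow m)) (VarsOf .one) (VarsOf .one)).symm := by
  refine equiv_ext_powVar (n := m + 2) fun k => (permCongr_powEquiv_apply _ _ k).trans ?_
  have hne (k : Fin m) : k.castSucc.castSucc ≠ (Fin.last m).castSucc ∧
      k.castSucc.castSucc ≠ (Fin.last m).succ := by
    refine ⟨?_, ?_⟩ <;> simp [Fin.ext_iff] <;> omega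
  induction k using Fin.lastCases with
  | last =>
    rw [Fin.succ_last, Equiv.swap_apply_right]
    simp only [powVar_castSucc, powVar_last]
    rfl
  | cast k =>
    induction k using Fin.lastCases with
    | last =>
      rw [Fin.succ_last, Equiv.swap_apply_left]
      simp only [powVar_castSucc, powVar_last]
      rfl
    | cast k =>
      rw [Equiv.swap_apply_of_ne_of_ne (hne k).1 (hne k).2]
      simp only [powVar_castSucc]
      rfl

lemma permCongr_swap_castSucc (m : ℕ) (j : Fin m) :
    (powEquiv (m + 2)).permCongr (Equiv.swap j.castSucc.castSucc j.castSucc.succ) =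
      ((powEquiv (m + 1)).permCongr (Equiv.swap j.castSucc j.succ)).sumCongr
        (Equiv.refl (VarsOf .one)) := by
  refine equiv_ext_powVar (n := m + 2) fun k => (permCongr_powEquiv_apply _ _ k).trans ?_
  induction k using Fin.lastCases with
  | last =>
    have hne : Fin.last (m + 1) ≠ j.castSucc.castSucc ∧ Fin.last (m + 1) ≠ j.castSucc.succ := by
      refine ⟨?_, ?_⟩ <;> simp [Fin.ext_iff] <;> omega
    rw [Equiv.swap_apply_of_ne_of_ne hne.1 hne.2]
    simp only [powVar_last]
    rfl
  | cast k =>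
    rw [Fin.succ_castSucc, (Fin.castSucc_injective _).swap_apply]
    simp only [powVar_castSucc]
    exact congrArg Sum.inl (permCongr_powEquiv_apply _ _ k).symm

lemma isAllowableEquiv_swap_castSucc_succ {n : ℕ} (i : Fin n) :
    IsAllowableEquiv (onePow (n + 1)) (onePow (n + 1))
      ((powEquiv (n + 1)).permCongr (Equiv.swap i.castSucc i.succ)) := by
  induction n with
  | zero => exact i.elim0
  | succ m ih =>
    induction i using Fin.lastCases with
    | last =>
      exact (((IsAllowableEquiv.sumAssoc _ _ _).trans
        ((IsAllowableEquiv.refl _).sumCongr (IsAllowableEquiv.sumComm _ _))).trans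
        (IsAllowableEquiv.sumAssoc_symm _ _ _)).of_eq (permCongr_swap_last m).symm
    | cast j =>
      exact ((ih j).sumCongr (IsAllowableEquiv.refl .one)).of_eq (permCongr_swap_castSucc m j).symm

lemma isAllowableEquiv_perm_onePow {n : ℕ} (σ : Equiv.Perm (VarsOf (onePow n))) :
    IsAllowableEquiv (onePow n) (onePow n) σ := by
  cases n with
  | zero =>
    exact (IsAllowableEquiv.refl _).of_eq (Equiv.ext fun v => isEmptyElim (α := VarsOf .unit) v)
  | succ n =>
    obtain ⟨τ, rfl⟩ := (powEquiv (n + 1)).permCongr.surjective σ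
    have hτ : τ ∈ Submonoid.closure (Set.range fun i : Fin n => Equiv.swap i.castSucc i.succ) := by
      rw [Equiv.Perm.mclosure_swap_castSucc_succ]
      exact Submonoid.mem_top τ
    induction hτ using Submonoid.closure_induction with
    | mem _ h =>
      obtain ⟨i, rfl⟩ := h
      exact isAllowableEquiv_swap_castSucc_succ i
    | one => exact (IsAllowableEquiv.refl _).of_eq (Equiv.permCongr_refl _).symm
    | mul a b _ _ ha hb => exact (hb.trans ha).of_eq (Equiv.permCongr_trans _ b a)

def evalTensorOne (Y : Shape) : KMGraph (.tensor (.hom Y .unit) (.tensor Y .one)) .one :=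
  ((tensorG (eG Y .unit) (idG .one)).mapLeft _ (IsAllowableEquiv.sumAssoc_symm _ _ _).1).mapRight
    _ ((IsAllowableEquiv.sumComm .unit .one).trans (IsAllowableEquiv.sumEmpty .one)).1

def thetaLast (Y : Shape) : KMGraph (.hom Y .unit) (.hom (.tensor Y .one) .one) :=
  (evalTensorOne Y).curry

lemma allowable_thetaLast (Y : Shape) : Allowable (thetaLast Y) :=
  Allowable.curry <| (Allowable.mapLeft (IsAllowableEquiv.sumAssoc_symm _ _ _)
    ((Allowable.egen Y .unit).tensor (.id .one))).mapRight
    ((IsAllowableEquiv.sumComm .unit .one).trans (IsAllowableEquiv.sumEmpty .one))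

/-- writing `X_k = [A₁ ⊗ ⋯ ⊗ A_k, A]` (`k = k' + 1` here) and given
`p`, there is an allowable morphism `θ_p : [A₁ ⊗ ⋯ ⊗ A_{p−1} ⊗ A_{p+1} ⊗ ⋯ ⊗ A_k, I] → X_k`
pairing `A` with `A_p` and each `Aᵢ` (`i ≠ p`) of the domain with `Aᵢ` of the codomain. -/
theorem theta_allowable (k' : ℕ) (p : Fin (k' + 1)) :
    ∃ θ : KMGraph (.hom (onePow k') .unit) (Xm (k' + 1)),
      Allowable θ ∧
      -- the mate of A is A_p
      θ.mate (Sum.inr (Sum.inr ())) = Sum.inr (Sum.inl (powVar (k' + 1) p)) ∧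
      -- the i-th variable of the domain is paired with the corresponding variable (skipping p)
      (∀ i : Fin k', θ.mate (Sum.inl (Sum.inl (powVar k' i)))
          = Sum.inr (Sum.inl (powVar (k' + 1) (p.succAbove i)))) := by
  set τ : Equiv.Perm (Fin (k' + 1)) := (finSuccEquiv' (Fin.last k')).trans (finSuccEquiv' p).symm
  have hπ := (isAllowableEquiv_perm_onePow ((powEquiv (k' + 1)).permCongr τ).symm).symm_sumCongr
    (IsAllowableEquiv.refl .one)
  refine ⟨_, (allowable_thetaLast (onePow k')).mapRight hπ, ?_, fun i => ?_⟩
  · have h := permCongr_powEquiv_apply (k' + 1) τ (Fin.last k')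
    rw [powVar_last] at h
    exact congrArg (Sum.inr ∘ Sum.inl) (h.trans (by simp [τ]))
  · have h := permCongr_powEquiv_apply (k' + 1) τ i.castSucc
    rw [powVar_castSucc] at h
    exact congrArg (Sum.inr ∘ Sum.inl) (h.trans (by simp [τ, finSuccEquiv'_last_apply_castSucc]))

end KM
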